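/- arXiv:2511.12097 — 2 statements merged into one kernel-verified Lean document; each statement's English description precedes it below -/
import Mathlib

section
/- (Representation of N:M sparsity.) For integers 1 ≤ N ≤ M, the N:M mask set satisfies S^{N:M} = { ⊕_{k=1}^{N} a_k : a_k ∈ {e_1, …, e_M} for each k }; that is, a binary vector m ∈ {0,1}^M has between 1 and N nonzero coordinates if and only if it is the probabilistic sum of N standard basis vectors (repetitions allowed). -/
/-- The probabilistic sum of two vectors in `ℝ^M`:
`a ⊕ b := 1 - (1 - a) ⊙ (1 - b)` coordinatewise. -/
def psum {M : ℕ} (a b : Fin M → ℝ) : Fin M → ℝ :=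
  fun i => 1 - (1 - a i) * (1 - b i)

/-- The iterated (left-fold) probabilistic sum `a 0 ⊕ a 1 ⊕ ⋯ ⊕ a (N-1)`
(junk value `0` when `N = 0`). -/
def iterPsum {M : ℕ} : (N : ℕ) → (Fin N → Fin M → ℝ) → Fin M → ℝ
  | 0, _ => fun _ => 0
  | 1, a => a 0
  | (N + 2), a => psum (iterPsum (N + 1) (fun i => a i.castSucc)) (a (Fin.last (N + 1)))

/-- The `j`-th standard basis vector of `ℝ^M`. -/
def stdBasis {M : ℕ} (j : Fin M) : Fin M → ℝ :=
  fun i => if i = j then 1 else 0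

/-- `‖m‖₀`: the number of nonzero coordinates of `m ∈ ℝ^M`. -/
noncomputable def zeroNorm {M : ℕ} (m : Fin M → ℝ) : ℕ :=
  Set.ncard {i : Fin M | m i ≠ 0}

/-- The `N:M` mask set `S^{N:M} = { m ∈ {0,1}^M : 1 ≤ ‖m‖₀ ≤ N }`. -/
def maskSet (M N : ℕ) : Set (Fin M → ℝ) :=
  {m | (∀ i, m i = 0 ∨ m i = 1) ∧ 1 ≤ zeroNorm m ∧ zeroNorm m ≤ N}

/-! A `0/1` vector is the indicator of its support, and on indicators the probabilistic sum is the
indicator of the union (`1 - (1 - a) (1 - b)` is `max a b` on `{0, 1}`). Hence `⊕ₖ e_{j k}` is the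
indicator of the range of `j`, and the ranges of maps `Fin N → Fin M` are exactly the sets with
between `1` and `N` elements. -/

open Set

lemma exists_indicator_one_iff {α : Type*} (m : α → ℝ) :
    (∃ s : Set α, m = s.indicator 1) ↔ ∀ i, m i = 0 ∨ m i = 1 := by
  constructor
  · rintro ⟨s, rfl⟩ i
    by_cases hi : i ∈ s <;> simp [hi]
  · intro h
    refine ⟨{i | m i = 1}, funext fun i => ?_⟩
    rcases h i with hi | hi <;> simp [hi]

lemma exists_fin_range_eq_iff {α : Type*} {N : ℕ} (hN : 1 ≤ N) {s : Set α} (hs : s.Finite) :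
    (∃ j : Fin N → α, range j = s) ↔ 1 ≤ s.ncard ∧ s.ncard ≤ N := by
  classical
  constructor
  · rintro ⟨j, rfl⟩
    refine ⟨(ncard_pos (finite_range j)).2 (range_nonempty_iff_nonempty.2 ⟨⟨0, hN⟩⟩), ?_⟩
    simpa [← image_univ] using ncard_image_le (f := j) (s := univ)
  · rintro ⟨hpos, hle⟩
    have : Fintype s := hs.fintype
    obtain ⟨f, hf⟩ : ∃ f : Fin N → s, Function.Surjective f := by
      refine Function.exists_surjective_iff.2 ⟨?_, Function.Embedding.nonempty_of_card_le ?_⟩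
      · obtain ⟨x, hx⟩ := (ncard_pos hs).1 hpos
        exact ⟨fun _ => ⟨x, hx⟩⟩
      · rwa [Fintype.card_fin, ← Nat.card_eq_fintype_card, Nat.card_coe_set_eq]
    exact ⟨(↑) ∘ f, by rw [range_comp, hf.range_eq, image_univ, Subtype.range_coe]⟩

lemma stdBasis_eq_indicator {M : ℕ} (j : Fin M) : stdBasis j = ({j} : Set (Fin M)).indicator 1 := by
  ext i
  simp [stdBasis, indicator_apply]

lemma psum_indicator_one {M : ℕ} (s t : Set (Fin M)) :
    psum (s.indicator 1) (t.indicator 1) = (s ∪ t).indicator 1 := by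
  ext i
  by_cases hs : i ∈ s <;> by_cases ht : i ∈ t <;> simp [psum, hs, ht]

lemma iterPsum_stdBasis {M : ℕ} : ∀ (N : ℕ) (j : Fin (N + 1) → Fin M),
    iterPsum (N + 1) (fun k => stdBasis (j k)) = (range j).indicator 1
  | 0, j => by
    rw [iterPsum, stdBasis_eq_indicator, range_unique (ι := Fin 1)]
    rfl
  | N + 1, j => by
    have hrange : range j = range (Fin.init j) ∪ {j (Fin.last _)} := by
      rw [union_singleton, ← Fin.range_snoc, Fin.snoc_init_self]
    rw [iterPsum, iterPsum_stdBasis N, stdBasis_eq_indicator, psum_indicator_one, hrange]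
    rfl

lemma zeroNorm_indicator_one {M : ℕ} (s : Set (Fin M)) : zeroNorm (s.indicator 1) = s.ncard := by
  rw [zeroNorm, ← Function.support, support_indicator, Function.support_one, inter_univ]

lemma maskSet_eq_indicator (M N : ℕ) :
    maskSet M N = {m | ∃ s : Set (Fin M), m = s.indicator 1 ∧ 1 ≤ s.ncard ∧ s.ncard ≤ N} := by
  ext m
  simp only [maskSet, mem_ofPred_eq, ← exists_indicator_one_iff]
  constructor
  · rintro ⟨⟨s, rfl⟩, hcard⟩
    exact ⟨s, rfl, by rwa [zeroNorm_indicator_one] at hcard⟩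
  · rintro ⟨s, rfl, hcard⟩
    exact ⟨⟨s, rfl⟩, by rwa [zeroNorm_indicator_one]⟩

theorem maskSet_eq_iterPsum_basis_general (M N : ℕ) (hN : 1 ≤ N) :
    maskSet M N
      = {m | ∃ j : Fin N → Fin M, m = iterPsum N (fun k => stdBasis (j k))} := by
  obtain ⟨N, rfl⟩ := Nat.exists_eq_add_of_le' hN
  ext m
  simp only [maskSet_eq_indicator, iterPsum_stdBasis, mem_ofPred_eq]
  constructor
  · rintro ⟨s, rfl, hcard⟩
    obtain ⟨j, rfl⟩ := (exists_fin_range_eq_iff hN s.toFinite).2 hcard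
    exact ⟨j, rfl⟩
  · rintro ⟨j, rfl⟩
    exact ⟨range j, rfl, (exists_fin_range_eq_iff hN (finite_range j)).1 ⟨j, rfl⟩⟩

/-- Representation of `N:M` sparsity: for `1 ≤ N ≤ M`, the mask set `S^{N:M}` is
exactly the set of probabilistic sums of `N` standard basis vectors
(repetitions allowed). -/
theorem maskSet_eq_iterPsum_basis (M N : ℕ) (hN : 1 ≤ N) (hNM : N ≤ M) :
    maskSet M N
      = {m | ∃ j : Fin N → Fin M, m = iterPsum N (fun k => stdBasis (j k))} :=
  maskSet_eq_iterPsum_basis_general M N hN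
end

section
/- (Gumbel-max trick.) Let π = (π_1, …, π_M) be a probability vector with π_s > 0 for all s, and let g_1, …, g_M be independent random variables each following the standard Gumbel distribution. Then almost surely the maximum of the values log(π_s) + g_s over s ∈ {1, …, M} is attained at a unique index, and for every j ∈ {1, …, M}, P(argmax_{s} (log(π_s) + g_s) = j) = π_j. -/
/-!
Put `G_s = log π_s + g_s`. Given `g_j = y`, index `j` wins iff `g_s < y + log π_j - log π_s` for
every `s ≠ j`; by independence this has probability `∏_{s ≠ j} exp (-(π_s / π_j) e^{-y})
= exp (-c e^{-y})` with `c = (1 - π_j) / π_j`. Since `E = e^{-g_j}` is standard exponential,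
averaging over `y` gives `𝔼[exp (-c E)] = 1 / (1 + c) = π_j`. The winning events are disjoint and their
probabilities add up to `1`, so almost surely exactly one index wins.
-/

open MeasureTheory ProbabilityTheory

/-- The standard Gumbel distribution: a probability measure on `ℝ` with cumulative
distribution function `x ↦ exp(-exp(-x))`. -/
def IsStdGumbel (μ : Measure ℝ) : Prop :=
  IsProbabilityMeasure μ ∧
    ∀ x : ℝ, μ (Set.Iic x) = ENNReal.ofReal (Real.exp (-Real.exp (-x)))

open Set ENNReal Function

lemma lintegral_Ioi_ofReal_exp_mul {b : ℝ} (hb : b < 0) (c : ℝ) :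
    ∫⁻ t in Ioi c, ENNReal.ofReal (Real.exp (b * t))
      = ENNReal.ofReal (-Real.exp (b * c) / b) := by
  rw [← integral_exp_mul_Ioi hb c, ofReal_integral_eq_lintegral_ofReal
    (integrableOn_exp_mul_Ioi hb c) (ae_of_all _ fun t => (Real.exp_pos _).le)]

theorem measure_pi_forall_ne_add_lt_add {n : ℕ} (μ : Fin (n + 1) → Measure ℝ)
    [∀ i, SigmaFinite (μ i)] (a : Fin (n + 1) → ℝ) (j : Fin (n + 1)) :
    Measure.pi μ {x | ∀ s ≠ j, a s + x s < a j + x j}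
      = ∫⁻ y, ∏ k, μ (j.succAbove k) (Iio (a j + y - a (j.succAbove k))) ∂μ j := by
  set S : Set (ℝ × (Fin n → ℝ)) := {p | ∀ k, a (j.succAbove k) + p.2 k < a j + p.1}
  have hS : MeasurableSet S := by measurability
  have hpre : {x : Fin (n + 1) → ℝ | ∀ s ≠ j, a s + x s < a j + x j}
      = MeasurableEquiv.piFinSuccAbove (fun _ => ℝ) j ⁻¹' S := by
    ext x
    simp [S, Fin.forall_iff_succAbove j, Fin.succAbove_ne, Fin.removeNth]
  rw [hpre, (measurePreserving_piFinSuccAbove μ j).measure_preimage hS.nullMeasurableSet,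
    Measure.prod_apply hS]
  refine lintegral_congr fun y => ?_
  rw [← Measure.pi_pi]
  congr 1
  ext z
  simp [S, lt_sub_iff_add_lt']

theorem ae_existsUnique_mem_of_sum_measure_eq_one {Ω ι : Type*} [MeasurableSpace Ω]
    {P : Measure Ω} [IsProbabilityMeasure P] [Fintype ι] {A : ι → Set Ω}
    (hA : ∀ i, MeasurableSet (A i)) (hdisj : Pairwise (Disjoint on A))
    (hsum : ∑ i, P (A i) = 1) :
    ∀ᵐ ω ∂P, ∃! i, ω ∈ A i := by
  have hcover : ∀ᵐ ω ∂P, ω ∈ ⋃ i, A i := by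
    rw [ae_mem_iff_measure_eq (MeasurableSet.iUnion hA).nullMeasurableSet,
      measure_iUnion hdisj hA, tsum_fintype, hsum, measure_univ]
  filter_upwards [hcover] with ω hω
  obtain ⟨i, hi⟩ := mem_iUnion.1 hω
  exact ⟨i, hi, fun k hk => hdisj.eq (not_disjoint_iff.2 ⟨ω, hk, hi⟩)⟩

section

open Real

lemma image_exp_neg_Iio (x : ℝ) : (fun y => exp (-y)) '' Iio x = Ioi (exp (-x)) := by
  rw [show (fun y => exp (-y)) = exp ∘ Neg.neg from rfl, image_comp, image_neg_Iio, image_exp_Ioi]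

lemma image_exp_neg_univ : (fun y => exp (-y)) '' univ = Ioi 0 := by
  rw [show (fun y => exp (-y)) = exp ∘ Neg.neg from rfl, image_comp,
    image_univ_of_surjective neg_surjective, image_univ, range_exp]

noncomputable def gumbelMeasure : Measure ℝ :=
  volume.withDensity fun x => ENNReal.ofReal (exp (-x) * exp (-exp (-x)))

instance : NullSingletonClass gumbelMeasure := by
  unfold gumbelMeasure; infer_instance

/-- Under the Gumbel law, `exp (-y)` is a standard exponential variable. -/
lemma setLIntegral_gumbelMeasure_comp_exp_neg {s : Set ℝ} (hs : MeasurableSet s)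
    {u : ℝ → ℝ≥0∞} (hu : Measurable u) :
    ∫⁻ y in s, u (exp (-y)) ∂gumbelMeasure
      = ∫⁻ t in (fun y => exp (-y)) '' s, ENNReal.ofReal (exp (-t)) * u t := by
  rw [lintegral_image_eq_lintegral_deriv_mul_of_antitoneOn hs
      (fun y _ => (hasDerivAt_neg y).exp.hasDerivWithinAt)
      (fun a _ b _ hab => exp_le_exp.2 (neg_le_neg hab)), gumbelMeasure,
    setLIntegral_withDensity_eq_setLIntegral_mul _ (by fun_prop)
      (g := fun y => u (exp (-y))) (hu.comp (by fun_prop)) hs]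
  refine setLIntegral_congr_fun hs fun y _ => ?_
  simp [ENNReal.ofReal_mul (exp_pos _).le, mul_assoc]

lemma gumbelMeasure_Iio (x : ℝ) : gumbelMeasure (Iio x) = ENNReal.ofReal (exp (-exp (-x))) := by
  have h := setLIntegral_gumbelMeasure_comp_exp_neg (measurableSet_Iio (a := x)) measurable_one
  simp only [Pi.one_apply, mul_one, setLIntegral_one, image_exp_neg_Iio] at h
  rw [h]
  simpa using lintegral_Ioi_ofReal_exp_mul neg_one_lt_zero (exp (-x))

lemma gumbelMeasure_Iic (x : ℝ) : gumbelMeasure (Iic x) = ENNReal.ofReal (exp (-exp (-x))) := by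
  rw [← measure_congr Iio_ae_eq_Iic, gumbelMeasure_Iio]

lemma IsStdGumbel.eq_gumbelMeasure {μ : Measure ℝ} (h : IsStdGumbel μ) : μ = gumbelMeasure :=
  haveI := h.1
  Measure.ext_of_Iic _ _ fun x => by rw [h.2, gumbelMeasure_Iic]

lemma lintegral_exp_neg_mul_exp_neg_gumbelMeasure {a : ℝ} (ha : -1 < a) :
    ∫⁻ y, ENNReal.ofReal (exp (-(a * exp (-y)))) ∂gumbelMeasure = ENNReal.ofReal (1 + a)⁻¹ := by
  have h := setLIntegral_gumbelMeasure_comp_exp_neg MeasurableSet.univ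
    (u := fun t => ENNReal.ofReal (exp (-(a * t)))) (by fun_prop)
  rw [Measure.restrict_univ, image_exp_neg_univ] at h
  rw [h, setLIntegral_congr_fun measurableSet_Ioi fun t _ => by
      rw [← ENNReal.ofReal_mul (exp_pos _).le, ← exp_add,
        show -t + -(a * t) = -(1 + a) * t by ring],
    lintegral_Ioi_ofReal_exp_mul (by linarith) 0, mul_zero, exp_zero, neg_div_neg_eq, one_div]

instance : IsProbabilityMeasure gumbelMeasure :=
  ⟨by simpa using lintegral_exp_neg_mul_exp_neg_gumbelMeasure (a := 0) (by norm_num)⟩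

open Finset in
theorem measure_pi_gumbelMeasure_argmax {n : ℕ} (w : Fin (n + 1) → ℝ) (hw : ∀ s, 0 < w s)
    (j : Fin (n + 1)) :
    Measure.pi (fun _ => gumbelMeasure) {x | ∀ s ≠ j, log (w s) + x s < log (w j) + x j}
      = ENNReal.ofReal (w j / ∑ s, w s) := by
  set c : ℝ := (∑ k, w (j.succAbove k)) / w j with hc_def
  have hc : 0 ≤ c := div_nonneg (sum_nonneg fun k _ => (hw _).le) (hw j).le
  have hterm : ∀ y k, exp (-(log (w j) + y - log (w (j.succAbove k))))
      = w (j.succAbove k) / w j * exp (-y) := fun y k => by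
    rw [show -(log (w j) + y - log (w (j.succAbove k)))
        = log (w (j.succAbove k)) - log (w j) + -y by ring,
      exp_add, exp_sub, exp_log (hw _), exp_log (hw _)]
  have hprod : ∀ y, ∏ k, gumbelMeasure (Iio (log (w j) + y - log (w (j.succAbove k))))
      = ENNReal.ofReal (exp (-(c * exp (-y)))) := fun y => by
    simp_rw [gumbelMeasure_Iio, ← ENNReal.ofReal_prod_of_nonneg fun _ _ => (exp_pos _).le,
      ← exp_sum, hterm, sum_neg_distrib, ← sum_mul, ← sum_div, ← hc_def]
  rw [measure_pi_forall_ne_add_lt_add, lintegral_congr hprod,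
    lintegral_exp_neg_mul_exp_neg_gumbelMeasure (by linarith), Fin.sum_univ_succAbove w j,
    hc_def, one_add_div (hw j).ne', inv_div]

end

/-- The Gumbel-max trick: if `π` is a probability vector with strictly positive
entries and `g_1, …, g_M` are i.i.d. standard Gumbel random variables, then almost
surely the maximum of `log π_s + g_s` is attained at a unique index, and the
probability that it is attained (strictly) at index `j` equals `π_j`. -/
theorem gumbel_max_trick {Ω : Type*} [MeasurableSpace Ω]
    (P : Measure Ω) [IsProbabilityMeasure P] (M : ℕ)
    (π : Fin M → ℝ) (hπ0 : ∀ s, 0 < π s) (hπ1 : ∑ s, π s = 1)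
    (g : Fin M → Ω → ℝ) (hg : ∀ s, Measurable (g s))
    (hindep : iIndepFun g P)
    (hgumbel : ∀ s, IsStdGumbel (Measure.map (g s) P)) :
    (∀ᵐ ω ∂P, ∃! j : Fin M, ∀ s : Fin M, s ≠ j →
        Real.log (π s) + g s ω < Real.log (π j) + g j ω) ∧
      ∀ j : Fin M,
        P {ω | ∀ s : Fin M, s ≠ j →
            Real.log (π s) + g s ω < Real.log (π j) + g j ω}
          = ENNReal.ofReal (π j) := by
  obtain _ | n := M
  · simp at hπ1
  have hlaw : P.map (fun ω i => g i ω) = Measure.pi fun _ => gumbelMeasure := by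
    rw [hindep.map_fun_eq_pi_map fun s => (hg s).aemeasurable]
    exact congrArg Measure.pi (funext fun s => (hgumbel s).eq_gumbelMeasure)
  set A : Fin (n + 1) → Set Ω :=
    fun j => {ω | ∀ s, s ≠ j → Real.log (π s) + g s ω < Real.log (π j) + g j ω}
  have hS : ∀ j, MeasurableSet
      {x : Fin (n + 1) → ℝ | ∀ s ≠ j, Real.log (π s) + x s < Real.log (π j) + x j} :=
    fun j => by measurability
  have hwin : ∀ j, P (A j) = ENNReal.ofReal (π j) := fun j => by
    have h := Measure.map_apply (μ := P) (measurable_pi_lambda _ hg) (hS j)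
    rw [hlaw, measure_pi_gumbelMeasure_argmax π hπ0, hπ1, div_one] at h
    exact h.symm
  refine ⟨ae_existsUnique_mem_of_sum_measure_eq_one (A := A)
    (fun j => measurable_pi_lambda _ hg (hS j))
    (fun i k hik => disjoint_left.2 fun ω hi hk => lt_asymm (hi k hik.symm) (hk i hik)) ?_, hwin⟩
  rw [Finset.sum_congr rfl fun j _ => hwin j,
    ← ENNReal.ofReal_sum_of_nonneg fun j _ => (hπ0 j).le, hπ1, ENNReal.ofReal_one]
end
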